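/- arXiv:math/0507251 — 7 statements merged into one kernel-verified Lean document; each statement's English description precedes it below -/
import Mathlib

section
/- Let X be a graph on v vertices and let D be a subset of d vertices of X. Then t^{-d} det(W_{D,D}(X, 1/t)) = φ(X\D, t)/φ(X, t), where W(X,t) = Σ_{r≥0} A^r t^r is the walk-generating matrix of X, W_{D,D} denotes its submatrix with rows and columns indexed by D, and φ denotes the characteristic polynomial of the adjacency matrix. -/
/-!
Since `1 - t⁻¹ A = t⁻¹ (t I - A)`, the walk generating matrix `W(X, 1/t)` is `t (t I - A)⁻¹`, so
`t^{-d} det W_{D,D}(X, 1/t)` is the principal minor of `(t I - A)⁻¹` on `D`. Jacobi's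
complementary minor theorem identifies it with `det (t I - A)_{Dᶜ,Dᶜ} / det (t I - A)`, which is
`φ(X \ D, t) / φ(X, t)`.
-/

open Matrix

namespace Matrix

variable {R : Type*} [CommRing R]

theorem eval_charpoly_submatrix {m n : Type*} [Fintype m] [Fintype n] [DecidableEq m]
    [DecidableEq n] (A : Matrix n n R) {e : m → n} (he : Function.Injective e) (t : R) :
    (A.submatrix e e).charpoly.eval t = ((scalar n t - A).submatrix e e).det := by
  rw [eval_charpoly, scalar_apply, scalar_apply, submatrix_sub, Pi.sub_apply, Pi.sub_apply,
    submatrix_diagonal _ _ he]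
  rfl

theorem det_toBlocks₁₁_inv_mul_det {m n : Type*} [Fintype m] [Fintype n] [DecidableEq m]
    [DecidableEq n] (M : Matrix (m ⊕ n) (m ⊕ n) R) (hM : IsUnit M.det) :
    (M⁻¹).toBlocks₁₁.det * M.det = M.toBlocks₂₂.det := by
  set N := M⁻¹
  have hMN : fromBlocks M.toBlocks₁₁ M.toBlocks₁₂ M.toBlocks₂₁ M.toBlocks₂₂ *
      fromBlocks N.toBlocks₁₁ N.toBlocks₁₂ N.toBlocks₂₁ N.toBlocks₂₂ = fromBlocks 1 0 0 1 := by
    rw [fromBlocks_toBlocks, fromBlocks_toBlocks, mul_nonsing_inv M hM, fromBlocks_one]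
  rw [fromBlocks_multiply, fromBlocks_inj] at hMN
  have hTriangular : M * fromBlocks N.toBlocks₁₁ 0 N.toBlocks₂₁ 1
      = fromBlocks 1 M.toBlocks₁₂ 0 M.toBlocks₂₂ := by
    rw [← fromBlocks_toBlocks M, fromBlocks_multiply]
    simp [hMN.1, hMN.2.2.1]
  have hdet := congrArg det hTriangular
  rw [det_mul, det_fromBlocks_zero₁₂, det_fromBlocks_zero₂₁, det_one, det_one, mul_one,
    one_mul] at hdet
  rw [mul_comm, hdet]

theorem det_submatrix_inv_mul_det {n : Type*} [Fintype n] [DecidableEq n] (B : Matrix n n R)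
    (hB : IsUnit B.det) (D : Finset n) :
    ((B⁻¹).submatrix ((↑) : D → n) (↑)).det * B.det
      = (B.submatrix ((↑) : ↥Dᶜ → n) (↑)).det := by
  let e : (↥D ⊕ ↥Dᶜ) ≃ n :=
    (Equiv.sumCongr (Equiv.refl ↥D) (Equiv.subtypeEquivRight fun _ => Finset.mem_compl)).trans
      (Equiv.sumCompl (· ∈ D))
  have hblocks := det_toBlocks₁₁_inv_mul_det (B.submatrix e e) (by rwa [det_submatrix_equiv_self])
  rwa [inv_submatrix_equiv, det_submatrix_equiv_self] at hblocks

theorem inv_one_sub_inv_smul {K n : Type*} [Field K] [Fintype n] [DecidableEq n]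
    (A : Matrix n n K) {t : K} (ht : t ≠ 0) (hA : IsUnit (scalar n t - A).det) :
    (1 - t⁻¹ • A)⁻¹ = t • (scalar n t - A)⁻¹ := by
  have hscale : 1 - t⁻¹ • A = (Units.mk0 t ht)⁻¹ • (scalar n t - A) := by
    rw [Units.smul_def, smul_sub, Units.val_inv_eq_inv_val, Units.val_mk0, scalar_apply,
      ← smul_one_eq_diagonal, smul_smul, inv_mul_cancel₀ ht, one_smul]
  rw [hscale, inv_smul' _ _ hA, inv_inv, Units.smul_def, Units.val_mk0]

end Matrix

/-- For a graph `X` on `v` vertices and a subset `D` of `d` vertices,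
`t^{-d} det(W_{D,D}(X, 1/t)) = φ(X\D, t) / φ(X, t)`, where the walk generating matrix
is `W(X, s) = Σ_{r≥0} A^r s^r = (I - s A)⁻¹`. -/
theorem walk_generating_det_submatrix {v : ℕ} (X : SimpleGraph (Fin v)) [DecidableRel X.Adj]
    (D : Finset (Fin v)) (t : ℝ) (ht : t ≠ 0)
    (hφ : Polynomial.eval t (X.adjMatrix ℝ).charpoly ≠ 0) :
    t ^ (-(D.card : ℤ)) *
      Matrix.det
        ((((1 : Matrix (Fin v) (Fin v) ℝ) - t⁻¹ • X.adjMatrix ℝ)⁻¹).submatrix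
          (fun x : ↥D => (x : Fin v)) (fun x : ↥D => (x : Fin v)))
    = Polynomial.eval t
        (((X.adjMatrix ℝ).submatrix
            (fun x : ↥(Dᶜ) => (x : Fin v)) (fun x : ↥(Dᶜ) => (x : Fin v))).charpoly)
      / Polynomial.eval t (X.adjMatrix ℝ).charpoly := by
  have hB : IsUnit (scalar (Fin v) t - X.adjMatrix ℝ).det := by
    rwa [isUnit_iff_ne_zero, ← eval_charpoly]
  rw [inv_one_sub_inv_smul _ ht hB, submatrix_smul, Pi.smul_apply, Pi.smul_apply, det_smul,
    Fintype.card_coe, eval_charpoly_submatrix _ Subtype.val_injective,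
    ← det_submatrix_inv_mul_det _ hB, eval_charpoly, mul_div_cancel_right₀ _ hB.ne_zero,
    ← mul_assoc, _root_.zpow_neg, zpow_natCast, inv_mul_cancel₀ (pow_ne_zero _ ht), one_mul]
end

section
/- For a graph X and distinct vertices i, j, the square of the walk generating function satisfies (t^{-1} W_{i,j}(X, 1/t))^2 · φ(X,t)^2 = φ(X\i, t)·φ(X\j, t) − φ(X, t)·φ(X\{i,j}, t). -/
open Matrix Polynomial

lemma eval_charpoly' {n : Type*} [Fintype n] [DecidableEq n] (N : Matrix n n ℝ) (t : ℝ) :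
    (N.charpoly).eval t = (t • (1 : Matrix n n ℝ) - N).det := by
  have h : (charmatrix N).map (Polynomial.evalRingHom t) = t • (1 : Matrix n n ℝ) - N := by
    ext a b
    by_cases h : a = b
    · subst h; simp [charmatrix_apply_eq]
    · simp [charmatrix_apply_ne _ _ _ h, Matrix.one_apply_ne h]
  rw [Matrix.charpoly, ← h]
  exact RingHom.map_det (Polynomial.evalRingHom t) _

-- Jacobi block lemma
lemma jacobi_block {m n : Type*} [Fintype m] [Fintype n] [DecidableEq m] [DecidableEq n]
    (A : Matrix m m ℝ) (B : Matrix m n ℝ) (C : Matrix n m ℝ) (D : Matrix n n ℝ)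
    (A' : Matrix m m ℝ) (B' : Matrix m n ℝ) (C' : Matrix n m ℝ) (D' : Matrix n n ℝ)
    (h : fromBlocks A B C D * fromBlocks A' B' C' D' = 1) :
    (fromBlocks A B C D).det * D'.det = A.det := by
  rw [Matrix.fromBlocks_multiply] at h
  have t12 : (1 : Matrix (m ⊕ n) (m ⊕ n) ℝ).toBlocks₁₂ = 0 := by
    ext a b; simp [Matrix.toBlocks₁₂, Matrix.one_apply]
  have t22 : (1 : Matrix (m ⊕ n) (m ⊕ n) ℝ).toBlocks₂₂ = 1 := by
    ext a b; simp [Matrix.toBlocks₂₂, Matrix.one_apply]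
  have h12 : A * B' + B * D' = 0 := by
    have h' := congrArg Matrix.toBlocks₁₂ h; 
    simpa [t12] using h'
  have h22 : C * B' + D * D' = 1 := by
    have h' := congrArg Matrix.toBlocks₂₂ h; 
    simpa [t22] using h'
  have key : fromBlocks A B C D * fromBlocks 1 B' 0 D' = fromBlocks A 0 C 1 := by
    rw [Matrix.fromBlocks_multiply]
    simp [h12, h22]
  have := congrArg Matrix.det key
  rw [Matrix.det_mul, Matrix.det_fromBlocks_zero₂₁, Matrix.det_fromBlocks_zero₁₂] at this
  simpa using this

lemma jacobi_principal {v : ℕ} (M : Matrix (Fin v) (Fin v) ℝ) (hM : IsUnit M.det)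
    (S : Finset (Fin v)) :
    M.det * ((M⁻¹).submatrix (fun x : ↥(Sᶜ) => (x : Fin v)) (fun x : ↥(Sᶜ) => (x : Fin v))).det
      = (M.submatrix (fun x : ↥S => (x : Fin v)) (fun x : ↥S => (x : Fin v))).det := by
  classical
  let e : ↥S ⊕ ↥(Sᶜ) ≃ Fin v :=
    (Equiv.sumCongr (Equiv.refl ↥S) (Equiv.subtypeEquivRight (fun x => Finset.mem_compl))).trans
      (Equiv.sumCompl (fun x => x ∈ S))
  have hel : ∀ x : ↥S, e (Sum.inl x) = (x : Fin v) := fun x => rfl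
  have her : ∀ x : ↥(Sᶜ), e (Sum.inr x) = (x : Fin v) := fun x => rfl
  have hmul : M.submatrix e e * (M⁻¹).submatrix e e = 1 := by
    rw [Matrix.submatrix_mul_equiv, Matrix.mul_nonsing_inv _ hM, Matrix.submatrix_one_equiv]
  have h := jacobi_block (M.submatrix e e).toBlocks₁₁ (M.submatrix e e).toBlocks₁₂
      (M.submatrix e e).toBlocks₂₁ (M.submatrix e e).toBlocks₂₂
      ((M⁻¹).submatrix e e).toBlocks₁₁ ((M⁻¹).submatrix e e).toBlocks₁₂
      ((M⁻¹).submatrix e e).toBlocks₂₁ ((M⁻¹).submatrix e e).toBlocks₂₂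
      (by rw [Matrix.fromBlocks_toBlocks, Matrix.fromBlocks_toBlocks]; exact hmul)
  rw [Matrix.fromBlocks_toBlocks] at h
  have hd : (M.submatrix e e).det = M.det := Matrix.det_submatrix_equiv_self e M
  have h11 : (M.submatrix e e).toBlocks₁₁
      = M.submatrix (fun x : ↥S => (x : Fin v)) (fun x : ↥S => (x : Fin v)) := by
    ext a b; simp [Matrix.toBlocks₁₁, hel]
  have h22 : ((M⁻¹).submatrix e e).toBlocks₂₂
      = (M⁻¹).submatrix (fun x : ↥(Sᶜ) => (x : Fin v)) (fun x : ↥(Sᶜ) => (x : Fin v)) := by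
    ext a b; simp [Matrix.toBlocks₂₂, her]
  rw [hd, h11, h22] at h
  exact h

lemma det_single {v : ℕ} (P : Matrix (Fin v) (Fin v) ℝ) (S : Finset (Fin v)) (i : Fin v)
    (h : ∀ x, x ∈ S ↔ x = i) :
    (P.submatrix (fun x : ↥S => (x : Fin v)) (fun x : ↥S => (x : Fin v))).det = P i i := by
  let e : Fin 1 ≃ ↥S :=
    { toFun := fun _ => ⟨i, (h i).2 rfl⟩
      invFun := fun _ => 0
      left_inv := fun x => Subsingleton.elim _ _
      right_inv := fun x => Subtype.ext (((h x).1 x.2).symm) }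
  rw [← Matrix.det_submatrix_equiv_self e, Matrix.submatrix_submatrix]
  rw [Matrix.det_fin_one]
  rfl

lemma det_pair {v : ℕ} (P : Matrix (Fin v) (Fin v) ℝ) (S : Finset (Fin v)) (i j : Fin v)
    (hij : i ≠ j) (h : ∀ x, x ∈ S ↔ x = i ∨ x = j) :
    (P.submatrix (fun x : ↥S => (x : Fin v)) (fun x : ↥S => (x : Fin v))).det
      = P i i * P j j - P i j * P j i := by
  let e : Fin 2 ≃ ↥S :=
    { toFun := ![⟨i, (h i).2 (Or.inl rfl)⟩, ⟨j, (h j).2 (Or.inr rfl)⟩]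
      invFun := fun x => if (x : Fin v) = i then 0 else 1
      left_inv := by
        intro x
        fin_cases x
        · simp
        · simp [hij.symm]
      right_inv := by
        intro x
        rcases (h x).1 x.2 with hx | hx
        · simp only [hx, if_pos rfl]
          exact Subtype.ext hx.symm
        · have : (x : Fin v) ≠ i := by rw [hx]; exact hij.symm
          simp only [this, if_neg this]
          exact Subtype.ext hx.symm }
  rw [← Matrix.det_submatrix_equiv_self e, Matrix.submatrix_submatrix]
  rw [Matrix.det_fin_two]
  have h0 : ((e 0 : ↥S) : Fin v) = i := rfl
  have h1 : ((e 1 : ↥S) : Fin v) = j := rfl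
  simp only [Matrix.submatrix_apply, Function.comp_apply, h0, h1]

lemma submatrix_smul_one_sub {v : ℕ} (A : Matrix (Fin v) (Fin v) ℝ) (t : ℝ)
    (S : Finset (Fin v)) :
    (t • (1 : Matrix (Fin v) (Fin v) ℝ) - A).submatrix
        (fun x : ↥S => (x : Fin v)) (fun x : ↥S => (x : Fin v))
      = t • (1 : Matrix (↥S) (↥S) ℝ)
        - A.submatrix (fun x : ↥S => (x : Fin v)) (fun x : ↥S => (x : Fin v)) := by
  ext a b
  simp [Matrix.submatrix_apply, Matrix.sub_apply, Matrix.smul_apply, Matrix.one_apply,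
    Subtype.coe_inj]


/-- For distinct vertices `i, j` of a graph `X`,
`(t⁻¹ W_{i,j}(X, 1/t))² φ(X,t)² = φ(X\i,t) φ(X\j,t) − φ(X,t) φ(X\{i,j},t)`,
with `W(X, s) = (I - s A)⁻¹`. -/
theorem walk_generating_offdiagonal_entry {v : ℕ} (X : SimpleGraph (Fin v)) [DecidableRel X.Adj]
    (i j : Fin v) (hij : i ≠ j) (t : ℝ) (ht : t ≠ 0)
    (hφ : Polynomial.eval t (X.adjMatrix ℝ).charpoly ≠ 0) :
    (t⁻¹ * (((1 : Matrix (Fin v) (Fin v) ℝ) - t⁻¹ • X.adjMatrix ℝ)⁻¹ i j)) ^ 2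
        * (Polynomial.eval t (X.adjMatrix ℝ).charpoly) ^ 2
    = Polynomial.eval t
        (((X.adjMatrix ℝ).submatrix
            (fun x : ↥(({i} : Finset (Fin v))ᶜ) => (x : Fin v))
            (fun x : ↥(({i} : Finset (Fin v))ᶜ) => (x : Fin v))).charpoly)
      * Polynomial.eval t
        (((X.adjMatrix ℝ).submatrix
            (fun x : ↥(({j} : Finset (Fin v))ᶜ) => (x : Fin v))
            (fun x : ↥(({j} : Finset (Fin v))ᶜ) => (x : Fin v))).charpoly)
      - Polynomial.eval t (X.adjMatrix ℝ).charpoly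
        * Polynomial.eval t
          (((X.adjMatrix ℝ).submatrix
              (fun x : ↥(({i, j} : Finset (Fin v))ᶜ) => (x : Fin v))
              (fun x : ↥(({i, j} : Finset (Fin v))ᶜ) => (x : Fin v))).charpoly) := by
  classical
  set A := X.adjMatrix ℝ with hA
  set M : Matrix (Fin v) (Fin v) ℝ := t • (1 : Matrix (Fin v) (Fin v) ℝ) - A with hM
  have hdet : Polynomial.eval t A.charpoly = M.det := eval_charpoly' A t
  have hMdet : M.det ≠ 0 := by rw [← hdet]; exact hφ
  have hMunit : IsUnit M.det := isUnit_iff_ne_zero.mpr hMdet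
  set B := M⁻¹ with hB
  -- the inverse computation
  have hinv : ((1 : Matrix (Fin v) (Fin v) ℝ) - t⁻¹ • A)⁻¹ = t • B := by
    apply Matrix.inv_eq_right_inv
    have h1 : (1 : Matrix (Fin v) (Fin v) ℝ) - t⁻¹ • A = t⁻¹ • M := by
      rw [hM, smul_sub, smul_smul, inv_mul_cancel₀ ht, one_smul]
    rw [h1, Matrix.smul_mul, Matrix.mul_smul, smul_smul, inv_mul_cancel₀ ht, one_smul,
      Matrix.mul_nonsing_inv _ hMunit]
  have hW : t⁻¹ * (((1 : Matrix (Fin v) (Fin v) ℝ) - t⁻¹ • A)⁻¹ i j) = B i j := by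
    rw [hinv, Matrix.smul_apply, smul_eq_mul, ← mul_assoc, inv_mul_cancel₀ ht, one_mul]
  -- symmetry
  have hsym : B j i = B i j := by
    have hMT : Mᵀ = M := by
      rw [hM, Matrix.transpose_sub, Matrix.transpose_smul, Matrix.transpose_one,
        hA, SimpleGraph.transpose_adjMatrix]
    have : Bᵀ = B := by rw [hB, Matrix.transpose_nonsing_inv, hMT]
    calc B j i = Bᵀ i j := rfl
    _ = B i j := by rw [this]
  -- evaluations of the minor charpolys
  have heval : ∀ S : Finset (Fin v),
      Polynomial.eval t ((A.submatrix (fun x : ↥S => (x : Fin v))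
        (fun x : ↥S => (x : Fin v))).charpoly)
      = (M.submatrix (fun x : ↥S => (x : Fin v)) (fun x : ↥S => (x : Fin v))).det := by
    intro S
    rw [eval_charpoly', hM, submatrix_smul_one_sub]
  -- Jacobi applications
  have hJi := jacobi_principal M hMunit ({i} : Finset (Fin v))ᶜ
  have hJj := jacobi_principal M hMunit ({j} : Finset (Fin v))ᶜ
  have hJij := jacobi_principal M hMunit ({i, j} : Finset (Fin v))ᶜ
  rw [det_single B _ i (fun x => by simp)] at hJi
  rw [det_single B _ j (fun x => by simp)] at hJj
  rw [det_pair B _ i j hij (fun x => by simp)] at hJij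
  rw [heval, heval, heval, hdet, ← hJi, ← hJj, ← hJij, hW, hsym]
  ring
end

section
/- If X is a strongly regular graph, then the characteristic polynomial φ(X\i, t) of the vertex-deleted subgraph is independent of the choice of vertex i. -/
open Matrix Polynomial

variable {v : ℕ} {R : Type*} [CommRing R]

/-- The equiv splitting off one index. -/
noncomputable def delEquiv (i : Fin v) : (↥(({i} : Finset (Fin v))ᶜ)) ⊕ Unit ≃ Fin v where
  toFun := Sum.elim (fun x => (x : Fin v)) (fun _ => i)
  invFun := fun x => if h : x = i then Sum.inr () else
    Sum.inl ⟨x, by simp [Finset.mem_compl, h]⟩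
  left_inv := by
    rintro (x | u)
    · have hx : (x : Fin v) ≠ i := by
        exact Finset.notMem_singleton.mp (Finset.mem_compl.mp x.2)
      simp [hx]
    · simp
  right_inv := by
    intro x
    by_cases h : x = i <;> simp [h]

lemma minor_det_eq_adjugate (M : Matrix (Fin v) (Fin v) R) (i : Fin v) :
    (M.submatrix (fun x : ↥(({i} : Finset (Fin v))ᶜ) => (x : Fin v))
        (fun x : ↥(({i} : Finset (Fin v))ᶜ) => (x : Fin v))).det
      = M.adjugate i i := by
  rw [adjugate_apply, ← det_submatrix_equiv_self (delEquiv i)]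
  have : (M.updateRow i (Pi.single i 1)).submatrix (delEquiv i) (delEquiv i) =
      fromBlocks
        (M.submatrix (fun x : ↥(({i} : Finset (Fin v))ᶜ) => (x : Fin v))
          (fun x : ↥(({i} : Finset (Fin v))ᶜ) => (x : Fin v)))
        (Matrix.of fun x _ => M (x : Fin v) i) 0 1 := by
    ext (x | u) (y | w)
    · have hx : (x : Fin v) ≠ i := by
        exact Finset.notMem_singleton.mp (Finset.mem_compl.mp x.2)
      simp [delEquiv, updateRow_apply, hx]
    · have hx : (x : Fin v) ≠ i := by
        exact Finset.notMem_singleton.mp (Finset.mem_compl.mp x.2)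
      simp [delEquiv, updateRow_apply, hx]
    · have hy : (y : Fin v) ≠ i := by
        exact Finset.notMem_singleton.mp (Finset.mem_compl.mp y.2)
      simp [delEquiv, updateRow_apply, Pi.single_eq_of_ne hy]
    · simp [delEquiv, updateRow_apply]
  rw [this, det_fromBlocks_zero₂₁]
  simp

lemma charmatrix_submatrix_inj (M : Matrix (Fin v) (Fin v) R) {m : Type*} [Fintype m]
    [DecidableEq m] (f : m → Fin v) (hf : Function.Injective f) :
    charmatrix (M.submatrix f f) = (charmatrix M).submatrix f f := by
  ext x y
  by_cases h : x = y
  · subst h; simp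
  · have : f x ≠ f y := fun hxy => h (hf hxy)
    simp [h, this]

section SRGAux
variable {v k a c : ℕ}
variable (X : SimpleGraph (Fin v)) [DecidableRel X.Adj]

local notation "R" => Polynomial ℝ

lemma srg_adjugate_diag (h : X.IsSRGWith v k a c) (i j : Fin v) :
    (charmatrix (X.adjMatrix ℝ)).adjugate i i
      = (charmatrix (X.adjMatrix ℝ)).adjugate j j := by
  classical
  set A : Matrix (Fin v) (Fin v) R := X.adjMatrix R with hA
  set J : Matrix (Fin v) (Fin v) R := Matrix.of (fun _ _ => (1 : R)) with hJdef
  set M : Matrix (Fin v) (Fin v) R := charmatrix (X.adjMatrix ℝ) with hM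
  -- M = X • 1 - A
  have hMeq : M = (Polynomial.X : R) • (1 : Matrix (Fin v) (Fin v) R) - A := by
    ext x y
    by_cases hxy : x = y
    · subst hxy; simp [hM, hA, SimpleGraph.adjMatrix_apply]
    · simp [hM, hA, hxy, SimpleGraph.adjMatrix_apply, Matrix.one_apply_ne hxy, apply_ite]
  -- A * J = k • J
  have hAJ : A * J = (k : R) • J := by
    ext x y
    simp only [hA, hJdef, SimpleGraph.adjMatrix_mul_apply, Matrix.smul_apply, Matrix.of_apply,
      smul_eq_mul, mul_one]
    have hd : (X.neighborFinset x).card = k := h.regular x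
    rw [Finset.sum_const, hd]
    simp
  -- 1 + A + C = J
  have hJ : (1 : Matrix (Fin v) (Fin v) R) + A + Xᶜ.adjMatrix R = J := by
    ext x y
    by_cases hxy : x = y
    · subst hxy
      simp [hA, hJdef]
    · by_cases hadj : X.Adj x y <;>
        simp [hA, hJdef, hxy, hadj, Matrix.one_apply_ne hxy, SimpleGraph.compl_adj]
  -- A * A = (k - c) • 1 + (a - c) • A + c • J
  have hA2 : A * A = ((k : R) - c) • 1 + ((a : R) - c) • A + (c : R) • J := by
    have h2 := h.matrix_eq (α := R)
    rw [pow_two] at h2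
    have hC : Xᶜ.adjMatrix R = J - 1 - A := by
      rw [← hJ]; abel
    rw [h2, hC]
    simp only [Nat.cast_smul_eq_nsmul R]
    module
  -- the inverse-like matrix N
  set β : R := Polynomial.X - (k : R) with hβ
  set γ : R := (c : R) with hγ
  set α : R := β * (Polynomial.X - (a : R) + (c : R)) with hα
  set Δ : R := β * (Polynomial.X * (Polynomial.X - (a : R) + (c : R)) - (k : R) + (c : R))
    with hΔ
  set N : Matrix (Fin v) (Fin v) R := α • 1 + β • A + γ • J with hN
  have key : M * N = Δ • 1 := by
    rw [hMeq, hN]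
    simp only [Matrix.mul_add, Matrix.add_mul, Matrix.sub_mul, smul_mul_assoc, mul_smul_comm,
      Matrix.one_mul, Matrix.mul_one]
    rw [hAJ, hA2]
    rw [hα, hΔ]
    match_scalars <;> ring
  have hdet : (M.det) • N = Δ • M.adjugate := by
    calc (M.det) • N = (M.det • (1 : Matrix (Fin v) (Fin v) R)) * N := by
          rw [Matrix.smul_mul, Matrix.one_mul]
      _ = (M.adjugate * M) * N := by rw [Matrix.adjugate_mul]
      _ = M.adjugate * (M * N) := by rw [Matrix.mul_assoc]
      _ = M.adjugate * (Δ • 1) := by rw [key]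
      _ = Δ • M.adjugate := by rw [mul_smul_comm, Matrix.mul_one]
  have hNdiag : ∀ x : Fin v, N x x = α + γ := by
    intro x
    simp [hN, hA, hJdef]
  have hii := congrFun (congrFun hdet i) i
  have hjj := congrFun (congrFun hdet j) j
  simp only [Matrix.smul_apply, smul_eq_mul, hNdiag] at hii hjj
  have hΔne : Δ ≠ 0 := by
    have h1 : β ≠ 0 := by
      rw [hβ, ← Polynomial.C_eq_natCast]
      exact Polynomial.X_sub_C_ne_zero _
    have h2 : (Polynomial.X * (Polynomial.X - (a : R) + (c : R)) - (k : R) + (c : R)) ≠ 0 := by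
      intro hzero
      have hc2 : (Polynomial.X * (Polynomial.X - (a : R) + (c : R)) - (k : R)
          + (c : R)).coeff 2 = 1 := by
        simp [Polynomial.coeff_X_mul, Polynomial.coeff_sub, Polynomial.coeff_add,
          Polynomial.coeff_X_one, Polynomial.coeff_natCast_ite]
      rw [hzero] at hc2
      simp at hc2
    exact mul_ne_zero h1 h2
  exact mul_left_cancel₀ hΔne (hii.symm.trans hjj)

end SRGAux

/-- If `X` is strongly regular, the characteristic polynomial of a vertex-deleted
subgraph `X \ i` does not depend on the choice of the deleted vertex `i`. -/
theorem srg_vertex_deleted_charpoly_indep {v k a c : ℕ} (X : SimpleGraph (Fin v))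
    [DecidableRel X.Adj] (h : X.IsSRGWith v k a c) (i j : Fin v) :
    ((X.adjMatrix ℝ).submatrix
        (fun x : ↥(({i} : Finset (Fin v))ᶜ) => (x : Fin v))
        (fun x : ↥(({i} : Finset (Fin v))ᶜ) => (x : Fin v))).charpoly
      = ((X.adjMatrix ℝ).submatrix
        (fun x : ↥(({j} : Finset (Fin v))ᶜ) => (x : Fin v))
        (fun x : ↥(({j} : Finset (Fin v))ᶜ) => (x : Fin v))).charpoly := by
  have hinj : ∀ m : Fin v, Function.Injective
      (fun x : ↥(({m} : Finset (Fin v))ᶜ) => (x : Fin v)) := fun m => Subtype.coe_injective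
  rw [Matrix.charpoly, Matrix.charpoly, charmatrix_submatrix_inj _ _ (hinj i),
    charmatrix_submatrix_inj _ _ (hinj j), minor_det_eq_adjugate, minor_det_eq_adjugate]
  exact srg_adjugate_diag X h i j
end

section
/- If X is a strongly regular graph and i≠j, i'≠j' are pairs of vertices with i adjacent to j and i' adjacent to j', then φ(X\{i,j}, t) = φ(X\{i',j'}, t); similarly for both pairs non-adjacent. -/
/-!
For `t` outside the spectrum of `A = adjMatrix X`, Jacobi's complementary minor identity gives
`φ(X \ {i, j}, t) = φ(X, t) · det R[{i, j}]` with `R = (t - A)⁻¹`.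
Since `A² = (a - c)A + (k - c)I + cJ` and `AJ = kJ`, the resolvent `R` is a combination of `I`,
`A` and `J`, so its `2 × 2` principal minor on `{i, j}` only depends on whether `i` and `j` are
adjacent. The two characteristic polynomials therefore agree at all but finitely many real `t`.
-/

open Matrix Polynomial

namespace Matrix

variable {R n ι κ : Type*} [CommRing R] [Fintype n] [DecidableEq n] [Fintype ι] [DecidableEq ι]
  [Fintype κ] [DecidableEq κ]

/-- Jacobi's complementary minor identity. Replacing the `κ`-columns of `N` by unit columns turns
`M * N` into a block triangular matrix. -/
theorem det_submatrix_inr_eq_det_mul_det_submatrix_inl {M N : Matrix n n R} (hMN : M * N = 1)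
    (e : ι ⊕ κ ≃ n) :
    (M.submatrix (e ∘ Sum.inr) (e ∘ Sum.inr)).det
      = M.det * (N.submatrix (e ∘ Sum.inl) (e ∘ Sum.inl)).det := by
  set M' := M.submatrix e e
  set N' := N.submatrix e e
  have hblocks : fromBlocks M'.toBlocks₁₁ M'.toBlocks₁₂ M'.toBlocks₂₁ M'.toBlocks₂₂
      * fromBlocks N'.toBlocks₁₁ N'.toBlocks₁₂ N'.toBlocks₂₁ N'.toBlocks₂₂
      = fromBlocks 1 0 0 1 := by
    rw [fromBlocks_toBlocks, fromBlocks_toBlocks, fromBlocks_one, submatrix_mul_equiv, hMN,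
      submatrix_one_equiv]
  rw [fromBlocks_multiply, fromBlocks_inj] at hblocks
  have htriangular : M' * fromBlocks N'.toBlocks₁₁ 0 N'.toBlocks₂₁ 1
      = fromBlocks 1 M'.toBlocks₁₂ 0 M'.toBlocks₂₂ := by
    rw [← fromBlocks_toBlocks M', fromBlocks_multiply, hblocks.1, hblocks.2.2.1]
    simp
  have hdet := congrArg det htriangular
  rw [det_mul, det_fromBlocks_zero₁₂, det_fromBlocks_zero₂₁, det_one, det_one, mul_one, one_mul,
    det_submatrix_equiv_self] at hdet
  exact hdet.symm

theorem eval_charpoly_submatrix_inr {A N : Matrix n n R} {t : R} (hN : (t • 1 - A) * N = 1)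
    (e : ι ⊕ κ ≃ n) :
    (A.submatrix (e ∘ Sum.inr) (e ∘ Sum.inr)).charpoly.eval t
      = A.charpoly.eval t * (N.submatrix (e ∘ Sum.inl) (e ∘ Sum.inl)).det := by
  rw [eval_charpoly, eval_charpoly, scalar_apply, scalar_apply, ← smul_one_eq_diagonal,
    ← smul_one_eq_diagonal, ← det_submatrix_inr_eq_det_mul_det_submatrix_inl hN e,
    ← submatrix_one _ (e.injective.comp Sum.inr_injective)]
  rfl

end Matrix

section

variable {V : Type*} [Fintype V] [DecidableEq V] {i j : V}

noncomputable def pairSumComplEquiv (hij : i ≠ j) : Fin 2 ⊕ ↥(({i, j} : Finset V)ᶜ) ≃ V :=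
  Equiv.ofBijective (Sum.elim ![i, j] Subtype.val) <| by
    refine ⟨Function.Injective.sumElim ?_ Subtype.val_injective ?_, fun x => ?_⟩
    · intro a b
      fin_cases a <;> fin_cases b <;> simp [hij, hij.symm]
    · rintro a ⟨x, hx⟩
      rw [Finset.mem_compl, Finset.mem_insert, Finset.mem_singleton, not_or] at hx
      fin_cases a <;> simp [Ne.symm hx.1, Ne.symm hx.2]
    · by_cases hx : x ∈ ({i, j} : Finset V)
      · rw [Finset.mem_insert, Finset.mem_singleton] at hx
        rcases hx with rfl | rfl
        exacts [⟨.inl 0, rfl⟩, ⟨.inl 1, rfl⟩]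
      · exact ⟨.inr ⟨x, Finset.mem_compl.2 hx⟩, rfl⟩

variable {R : Type*} [CommRing R]

theorem eval_charpoly_submatrix_compl_pair {A N : Matrix V V R} {t : R}
    (hN : (t • 1 - A) * N = 1) (hij : i ≠ j) :
    (A.submatrix (fun x : ↥(({i, j} : Finset V)ᶜ) => (x : V))
        (fun x : ↥(({i, j} : Finset V)ᶜ) => (x : V))).charpoly.eval t
      = A.charpoly.eval t * (N i i * N j j - N i j * N j i) := by
  have hminor : N.submatrix (pairSumComplEquiv hij ∘ Sum.inl) (pairSumComplEquiv hij ∘ Sum.inl)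
      = !![N i i, N i j; N j i, N j j] := by
    ext a b
    fin_cases a <;> fin_cases b <;> rfl
  rw [← det_fin_two_of, ← hminor]
  exact eval_charpoly_submatrix_inr hN (pairSumComplEquiv hij)

end

theorem finite_setOf_sq_sub_mul_sub_eq_zero {K : Type*} [CommRing K] [IsDomain K] (b c : K) :
    {t : K | t ^ 2 - b * t - c = 0}.Finite := by
  have hq : (X ^ 2 - C b * X - C c).Monic := by monicity!
  refine (finite_setOfPred_isRoot hq.ne_zero).subset fun t (ht : t ^ 2 - b * t - c = 0) => ?_
  simpa using ht

namespace SimpleGraph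

variable {V R K : Type*} [Fintype V] [CommRing R] [Field K] {G : SimpleGraph V}
  [DecidableRel G.Adj] {n k ℓ μ : ℕ}

theorem IsRegularOfDegree.adjMatrix_mul_of_one (h : G.IsRegularOfDegree k) :
    G.adjMatrix R * of 1 = (k : R) • of 1 := by
  ext v w
  simp [adjMatrix_mul_apply, h v]

variable [DecidableEq V]

theorem IsSRGWith.adjMatrix_sq (h : G.IsSRGWith n k ℓ μ) :
    G.adjMatrix R ^ 2 = ((ℓ : R) - μ) • G.adjMatrix R + ((k : R) - μ) • 1 + (μ : R) • of 1 := by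
  classical
  rw [h.matrix_eq, ← compl_adjMatrix_eq_adjMatrix_compl,
    ← sub_eq_of_eq_add' (G.one_add_adjMatrix_add_compl_adjMatrix_eq_of_one R).symm]
  simp only [← Nat.cast_smul_eq_nsmul R]
  module

/-- The inverse comes from `(t - A)(t + A - (ℓ - μ)) = q(t) - μJ` and `(t - A)J = (t - k)J`,
where `q(t) = t² - (ℓ - μ)t - (k - μ)`. -/
theorem IsSRGWith.sub_adjMatrix_mul_eq_one (h : G.IsSRGWith n k ℓ μ) {t : K} (hk : t ≠ k)
    (hq : t ^ 2 - (ℓ - μ) * t - (k - μ) ≠ 0) :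
    (t • 1 - G.adjMatrix K) * ((t ^ 2 - (ℓ - μ) * t - (k - μ))⁻¹
      • ((t - ℓ + μ) • 1 + G.adjMatrix K + (μ / (t - k)) • of 1)) = 1 := by
  have hsq := h.adjMatrix_sq (R := K)
  rw [sq] at hsq
  have hprod : (t • 1 - G.adjMatrix K) * ((t - ℓ + μ) • 1 + G.adjMatrix K + (μ / (t - k)) • of 1)
      = (t ^ 2 - (ℓ - μ) * t - (k - μ)) • 1 := by
    simp only [Matrix.sub_mul, Matrix.mul_add, Matrix.smul_mul, Matrix.mul_smul, Matrix.one_mul,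
      Matrix.mul_one, hsq, h.regular.adjMatrix_mul_of_one]
    have hμ : μ / (t - k) * (t - k) = μ := div_mul_cancel₀ _ (sub_ne_zero.2 hk)
    match_scalars
    · ring
    · ring
    · linear_combination hμ
  rw [Matrix.mul_smul, hprod, smul_smul, inv_mul_cancel₀ hq, one_smul]

end SimpleGraph

/-- If `X` is strongly regular and `i ≠ j`, `i' ≠ j'` are pairs of vertices that are
either both adjacent or both non-adjacent, then `φ(X \ {i,j}, t) = φ(X \ {i',j'}, t)`. -/
theorem srg_pair_deleted_charpoly {v k a c : ℕ} (X : SimpleGraph (Fin v))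
    [DecidableRel X.Adj] (h : X.IsSRGWith v k a c)
    (i j i' j' : Fin v) (hij : i ≠ j) (hij' : i' ≠ j')
    (hadj : X.Adj i j ↔ X.Adj i' j') :
    ((X.adjMatrix ℝ).submatrix
        (fun x : ↥(({i, j} : Finset (Fin v))ᶜ) => (x : Fin v))
        (fun x : ↥(({i, j} : Finset (Fin v))ᶜ) => (x : Fin v))).charpoly
      = ((X.adjMatrix ℝ).submatrix
        (fun x : ↥(({i', j'} : Finset (Fin v))ᶜ) => (x : Fin v))
        (fun x : ↥(({i', j'} : Finset (Fin v))ᶜ) => (x : Fin v))).charpoly := by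
  have hbad : {t : ℝ | t = k ∨ t ^ 2 - (a - c) * t - (k - c) = 0}.Finite :=
    (Set.finite_singleton _).union (finite_setOf_sq_sub_mul_sub_eq_zero _ _)
  apply eq_of_infinite_eval_eq
  refine hbad.infinite_compl.mono fun t ht => ?_
  simp only [Set.mem_compl_iff, Set.mem_ofPred_eq, not_or] at ht
  have hN := h.sub_adjMatrix_mul_eq_one ht.1 ht.2
  rw [Set.mem_ofPred_eq, eval_charpoly_submatrix_compl_pair hN hij,
    eval_charpoly_submatrix_compl_pair hN hij']
  simp [SimpleGraph.adjMatrix_apply, one_apply, hij, hij', hij.symm, hij'.symm, hadj,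
    SimpleGraph.adj_comm]
end

section
/- Let X be strongly regular with parameters (v,k;a,c), c ≥ 1, and set δ = a − c. Then k + δ + √((k−δ)² − 4c) is an eigenvalue of the adjacency matrix of the symmetric square X^{ {2} }, and it equals the spectral radius of X^{ {2} }. -/
/-!
Split the vertices of `X^{2}` into the edges and the non-edges of `X`. The neighbours of `{u, w}`
in `X^{2}` are the sets `{u, x}` with `x ∈ N(w) \ {u}` and `{w, x}` with `x ∈ N(u) \ {w}`, and
exactly as many of them are edges of `X` as `u` and `w` have common neighbours. So the partition
is equitable with quotient matrix `[[2a, 2k-2a-2], [2c, 2k-2c]]`, and the quotient eigenvector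
`(θ - 2k + 2c, 2c)` for its larger eigenvalue `θ = k + δ + √((k-δ)² - 4c)` lifts to an
eigenvector of `X^{2}`. It is positive because `a + 2 ≤ k` (a non-edge `uw` has a common
neighbour `p`, and `u`, `w` are neighbours of `p` outside the common neighbourhood of `p` and `u`).
Pairing a positive eigenvector `z` of a nonnegative symmetric matrix `A` with the componentwise
inequality `|ν| |y| ≤ A |y|` for any eigenpair `(ν, y)` gives `|ν| ≤ θ`.
-/

attribute [local instance] Classical.propDecidable

/-- The symmetric square of a graph: vertices are the 2-subsets of `V`,
two 2-subsets being adjacent iff their symmetric difference is an edge. -/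
def symSq {V : Type*} [DecidableEq V] (X : SimpleGraph V) :
    SimpleGraph {s : Finset V // s.card = 2} where
  Adj s t := ∃ x y, X.Adj x y ∧ symmDiff s.1 t.1 = {x, y}
  symm := by
    constructor
    rintro s t ⟨x, y, hxy, h⟩
    exact ⟨x, y, hxy, by rwa [symmDiff_comm]⟩
  loopless := by
    constructor
    rintro s ⟨x, y, hxy, h⟩
    rw [symmDiff_self] at h
    have hx : x ∈ (⊥ : Finset V) := h ▸ Finset.mem_insert_self x {y}
    simp at hx

open Finset

namespace Matrix

variable {n R : Type*} [Fintype n] [Field R] [LinearOrder R] [IsStrictOrderedRing R]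

theorem abs_le_of_pos_left_eigenvector {A : Matrix n n R} (hA : ∀ i j, 0 ≤ A i j)
    {z : n → R} (hz : ∀ i, 0 < z i) {θ : R} (hzA : z ᵥ* A = θ • z) {ν : R} {y : n → R}
    (hy : y ≠ 0) (hAy : A *ᵥ y = ν • y) : |ν| ≤ θ := by
  set y' : n → R := fun i => |y i|
  have hAy' : |ν| • y' ≤ A *ᵥ y' := fun i => by
    calc |ν| * |y i| = |∑ j, A i j * y j| := by
          rw [← abs_mul, ← smul_eq_mul, ← Pi.smul_apply, ← hAy]; rfl
      _ ≤ ∑ j, A i j * |y j| := by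
          refine (abs_sum_le_sum_abs _ _).trans_eq (sum_congr rfl fun j _ => ?_)
          rw [abs_mul, abs_of_nonneg (hA i j)]
  have hpos : 0 < z ⬝ᵥ y' := by
    obtain ⟨i, hi⟩ := Function.ne_iff.mp hy
    exact sum_pos' (fun j _ => mul_nonneg (hz j).le (abs_nonneg _))
      ⟨i, mem_univ i, mul_pos (hz i) (abs_pos.mpr hi)⟩
  refine le_of_mul_le_mul_right ?_ hpos
  calc |ν| * (z ⬝ᵥ y') = z ⬝ᵥ (|ν| • y') := by rw [dotProduct_smul, smul_eq_mul]
    _ ≤ z ⬝ᵥ (A *ᵥ y') := dotProduct_le_dotProduct_of_nonneg_left hAy' fun i => (hz i).le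
    _ = θ * (z ⬝ᵥ y') := by rw [dotProduct_mulVec, hzA, smul_dotProduct, smul_eq_mul]

end Matrix

theorem Finset.pair_injOn {V : Type*} [DecidableEq V] (a : V) :
    Set.InjOn (fun x => ({a, x} : Finset V)) {a}ᶜ := by
  intro x hx y _ (h : ({a, x} : Finset V) = {a, y})
  rw [pair_comm a x, pair_comm a y] at h
  exact (insert_inj (notMem_singleton.mpr hx)).mp h

section SymSq

variable {V : Type*} [DecidableEq V] (X : SimpleGraph V)

theorem symSq_adj_pair_iff {u w : V} (huw : u ≠ w) (t : {s : Finset V // s.card = 2}) :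
    (symSq X).Adj ⟨{u, w}, card_pair huw⟩ t ↔
      ∃ x, (x ≠ u ∧ X.Adj w x ∧ t.1 = {u, x}) ∨ (x ≠ w ∧ X.Adj u x ∧ t.1 = {w, x}) := by
  obtain ⟨p, q, hpq, ht⟩ := card_eq_two.mp t.2
  change (∃ x y, X.Adj x y ∧ symmDiff {u, w} t.1 = {x, y}) ↔ _
  rw [ht]
  simp only [Finset.ext_iff, mem_symmDiff, mem_insert, mem_singleton]
  constructor
  · rintro ⟨x, y, hxy, h⟩
    -- the set equation only matters at the six named points
    have := h u; have := h w; have := h p; have := h q; have := h x; have := h y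
    have := hxy.ne
    grind [SimpleGraph.Adj.symm]
  · rintro ⟨x, ⟨hxu, hwx, h⟩ | ⟨hxw, hux, h⟩⟩
    · exact ⟨w, x, hwx, fun z => by have := h z; have := hwx.ne; grind⟩
    · exact ⟨u, x, hux, fun z => by have := h z; have := hux.ne; grind⟩

variable [Fintype V] [DecidableRel X.Adj] [DecidableRel (symSq X).Adj]

theorem symSq_sum_neighborFinset {M : Type*} [AddCommMonoid M] {u w : V} (huw : u ≠ w)
    (g : Finset V → M) :
    ∑ t ∈ (symSq X).neighborFinset ⟨{u, w}, card_pair huw⟩, g t.1 =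
      ∑ x ∈ (X.neighborFinset w).erase u, g {u, x} +
        ∑ x ∈ (X.neighborFinset u).erase w, g {w, x} := by
  have hmap : ((symSq X).neighborFinset ⟨{u, w}, card_pair huw⟩).map (.subtype _) =
      ((X.neighborFinset w).erase u).image (fun x => {u, x}) ∪
        ((X.neighborFinset u).erase w).image (fun x => {w, x}) := by
    ext T
    simp only [mem_map, SimpleGraph.mem_neighborFinset, mem_union, mem_image, mem_erase,
      Function.Embedding.subtype_apply]
    constructor
    · rintro ⟨t, ht, rfl⟩
      obtain ⟨x, ⟨hxu, hwx, hx⟩ | ⟨hxw, hux, hx⟩⟩ := (symSq_adj_pair_iff X huw t).mp ht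
      · exact .inl ⟨x, ⟨hxu, hwx⟩, hx.symm⟩
      · exact .inr ⟨x, ⟨hxw, hux⟩, hx.symm⟩
    · rintro (⟨x, ⟨hxu, hwx⟩, rfl⟩ | ⟨x, ⟨hxw, hux⟩, rfl⟩)
      · exact ⟨⟨{u, x}, card_pair hxu.symm⟩,
          (symSq_adj_pair_iff X huw _).mpr ⟨x, .inl ⟨hxu, hwx, rfl⟩⟩, rfl⟩
      · exact ⟨⟨{w, x}, card_pair hxw.symm⟩,
          (symSq_adj_pair_iff X huw _).mpr ⟨x, .inr ⟨hxw, hux, rfl⟩⟩, rfl⟩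
  have hsum := sum_map ((symSq X).neighborFinset ⟨{u, w}, card_pair huw⟩) (.subtype _) g
  rw [Function.Embedding.coe_subtype, hmap] at hsum
  rw [← hsum, sum_union, sum_image, sum_image]
  · exact (pair_injOn w).mono fun x hx => ne_of_mem_erase hx
  · exact (pair_injOn u).mono fun x hx => ne_of_mem_erase hx
  · simp only [disjoint_left, mem_image, mem_erase, SimpleGraph.mem_neighborFinset]
    rintro T ⟨x, ⟨hxu, hwx⟩, rfl⟩ ⟨y, ⟨hyw, huy⟩, h⟩
    rw [Finset.ext_iff] at h
    have := h u; have := h w; have := hwx.ne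
    simp only [mem_insert, mem_singleton] at *
    grind

end SymSq

namespace SimpleGraph

variable {V : Type*} [Fintype V] {G : SimpleGraph V} [DecidableRel G.Adj] {n k ℓ μ : ℕ}

theorem IsSRGWith.add_two_le (h : G.IsSRGWith n k ℓ μ) (hμ : μ ≠ 0) (hG : G ≠ ⊤) :
    ℓ + 2 ≤ k := by
  classical
  obtain ⟨u, w, huw, hnadj⟩ := ne_top_iff_exists_not_adj.mp hG
  obtain ⟨p, hup, hwp⟩ : ∃ p, G.Adj u p ∧ G.Adj w p := by
    have : 0 < Fintype.card (G.commonNeighbors u w) := by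
      rw [h.of_not_adj huw hnadj]; exact Nat.pos_of_ne_zero hμ
    obtain ⟨⟨p, hp⟩⟩ := Fintype.card_pos_iff.mp this
    exact ⟨p, hp⟩
  have hsub : insert u (insert w (G.commonNeighbors p u).toFinset) ⊆ G.neighborFinset p := by
    intro x
    simp only [mem_insert, Set.mem_toFinset, mem_commonNeighbors, mem_neighborFinset]
    rintro (rfl | rfl | ⟨hpx, -⟩)
    exacts [hup.symm, hwp.symm, hpx]
  have hu : u ∉ insert w (G.commonNeighbors p u).toFinset := by simp [huw, mem_commonNeighbors]
  have hw : w ∉ (G.commonNeighbors p u).toFinset := by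
    simpa [mem_commonNeighbors] using fun _ => hnadj
  have := card_le_card hsub
  rwa [card_insert_of_notMem hu, card_insert_of_notMem hw, Set.toFinset_card,
    h.of_adj p u hup.symm, card_neighborFinset_eq_degree, h.regular p] at this

section

variable [DecidableEq V]

theorem filter_adj_erase_neighborFinset (u w : V) :
    ((G.neighborFinset w).erase u).filter (G.Adj u) = (G.commonNeighbors u w).toFinset := by
  ext x
  simp only [mem_filter, mem_erase, mem_neighborFinset, Set.mem_toFinset, mem_commonNeighbors]
  exact ⟨fun ⟨⟨_, hwx⟩, hux⟩ => ⟨hux, hwx⟩, fun ⟨hux, hwx⟩ => ⟨⟨hux.ne', hwx⟩, hux⟩⟩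

theorem sum_erase_neighborFinset_ite {R : Type*} [AddCommGroup R] (u w : V) (α β : R) :
    ∑ x ∈ (G.neighborFinset w).erase u, (if G.Adj u x then α else β) =
      ((G.neighborFinset w).erase u).card • β +
        Fintype.card (G.commonNeighbors u w) • (α - β) := by
  have hsplit : ∀ x, (if G.Adj u x then α else β) = β + if G.Adj u x then α - β else 0 :=
    fun x => by split_ifs <;> abel
  rw [sum_congr rfl fun x _ => hsplit x, sum_add_distrib, sum_const, ← sum_filter, sum_const,
    filter_adj_erase_neighborFinset, Set.toFinset_card]

theorem IsSRGWith.sum_erase_neighborFinset_ite {R : Type*} [Ring R]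
    (h : G.IsSRGWith n k ℓ μ) {u w : V} (huw : u ≠ w) (α β : R) :
    ∑ x ∈ (G.neighborFinset w).erase u, (if G.Adj u x then α else β) =
      if G.Adj u w then (k - 1 : R) * β + ℓ * (α - β) else k * β + μ * (α - β) := by
  rw [SimpleGraph.sum_erase_neighborFinset_ite, nsmul_eq_mul, nsmul_eq_mul]
  split_ifs with hadj
  · have hcard := card_erase_add_one ((G.mem_neighborFinset w u).mpr hadj.symm)
    rw [card_neighborFinset_eq_degree, h.regular w] at hcard
    rw [h.of_adj u w hadj, ← hcard]
    push_cast
    rw [add_sub_cancel_right]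
  · rw [erase_eq_of_notMem fun h' => hadj ((G.mem_neighborFinset w u).mp h').symm,
      card_neighborFinset_eq_degree, h.regular w, h.of_not_adj huw hadj]

end

noncomputable def edgeWeight {W : Type*} (X : SimpleGraph W) {R : Type*} (α β : R)
    (T : Finset W) : R :=
  if X.IsClique (T : Set W) then α else β

theorem edgeWeight_pair {W : Type*} [DecidableEq W] (X : SimpleGraph W) [DecidableRel X.Adj]
    {R : Type*} (α β : R) {u w : W} (huw : u ≠ w) :
    X.edgeWeight α β {u, w} = if X.Adj u w then α else β := by
  simp [edgeWeight, huw]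

open Matrix in
theorem IsSRGWith.symSq_adjMatrix_mulVec_edgeWeight [DecidableEq V]
    [DecidableRel (symSq G).Adj] {R : Type*} [CommRing R] (h : G.IsSRGWith n k ℓ μ)
    {α β θ : R} (hedge : 2 * ℓ * α + (2 * k - 2 * ℓ - 2) * β = θ * α)
    (hnonedge : 2 * μ * α + (2 * k - 2 * μ) * β = θ * β) :
    (symSq G).adjMatrix R *ᵥ (G.edgeWeight α β ∘ Subtype.val) =
      θ • (G.edgeWeight α β ∘ Subtype.val) := by
  funext s
  obtain ⟨u, w, huw, hs⟩ := card_eq_two.mp s.2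
  obtain rfl : s = ⟨{u, w}, card_pair huw⟩ := Subtype.ext hs
  have hside : ∀ {a b : V}, a ≠ b → ∑ x ∈ (G.neighborFinset b).erase a, G.edgeWeight α β {a, x} =
      if G.Adj a b then (k - 1 : R) * β + ℓ * (α - β) else k * β + μ * (α - β) := fun hab => by
    rw [← h.sum_erase_neighborFinset_ite hab]
    exact sum_congr rfl fun x hx => G.edgeWeight_pair α β (ne_of_mem_erase hx).symm
  simp only [adjMatrix_mulVec_apply, Pi.smul_apply, Function.comp_apply]
  rw [G.edgeWeight_pair α β huw, symSq_sum_neighborFinset G huw, hside huw, hside huw.symm]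
  simp only [G.adj_comm w u, smul_eq_mul]
  split_ifs
  · linear_combination hedge
  · linear_combination hnonedge

end SimpleGraph

open SimpleGraph Matrix in
theorem symSq_spectral_radius_general {v k a c : ℕ} (X : SimpleGraph (Fin v))
    [DecidableRel X.Adj] (hX : X.IsSRGWith v k a c) (hc : 1 ≤ c)
    (htop : X ≠ ⊤) :
    (∃ z : {s : Finset (Fin v) // s.card = 2} → ℝ, z ≠ 0 ∧
        ((symSq X).adjMatrix ℝ).mulVec z
          = ((k : ℝ) + ((a : ℝ) - c) + Real.sqrt (((k : ℝ) - ((a : ℝ) - c)) ^ 2 - 4 * c)) • z) ∧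
      ∀ (ν : ℝ) (z : {s : Finset (Fin v) // s.card = 2} → ℝ), z ≠ 0 →
        ((symSq X).adjMatrix ℝ).mulVec z = ν • z →
        |ν| ≤ (k : ℝ) + ((a : ℝ) - c) + Real.sqrt (((k : ℝ) - ((a : ℝ) - c)) ^ 2 - 4 * c) := by
  set r := Real.sqrt (((k : ℝ) - ((a : ℝ) - c)) ^ 2 - 4 * c)
  have hk : (a : ℝ) + 2 ≤ k := by exact_mod_cast hX.add_two_le (by omega) htop
  have hc' : (1 : ℝ) ≤ c := by exact_mod_cast hc
  have hr_gt : (k : ℝ) - a - c < r := Real.lt_sqrt_of_sq_lt (by nlinarith)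
  have hr_sq : r ^ 2 = ((k : ℝ) - (a - c)) ^ 2 - 4 * c := Real.sq_sqrt (by nlinarith)
  set z := X.edgeWeight (r - (k - a - c)) (2 * c : ℝ) ∘ Subtype.val
  have hz : ∀ s, 0 < z s := fun s => by
    simp only [z, Function.comp_apply, edgeWeight]
    split_ifs <;> linarith
  have hAz : (symSq X).adjMatrix ℝ *ᵥ z = ((k : ℝ) + (a - c) + r) • z :=
    hX.symSq_adjMatrix_mulVec_edgeWeight (by linear_combination -hr_sq) (by ring)
  obtain ⟨u, w, huw, -⟩ := ne_top_iff_exists_not_adj.mp htop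
  refine ⟨⟨z, fun h0 => (hz ⟨{u, w}, Finset.card_pair huw⟩).ne' (congrFun h0 _), hAz⟩,
    fun ν y hy hAy => abs_le_of_pos_left_eigenvector (fun s t => ?_) hz ?_ hy hAy⟩
  · rw [adjMatrix_apply]
    split_ifs <;> norm_num
  · rw [← mulVec_transpose, (isSymm_adjMatrix _).eq, hAz]

/-- For a strongly regular graph with parameters `(v,k;a,c)` and `δ = a − c`, the number
`k + δ + √((k−δ)² − 4c)` is an eigenvalue of the adjacency matrix of the symmetric square,
and it is the spectral radius: every eigenvalue `ν` satisfies `|ν| ≤ k + δ + √((k−δ)² − 4c)`. -/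
theorem symSq_spectral_radius {v k a c : ℕ} (X : SimpleGraph (Fin v))
    [DecidableRel X.Adj] (hX : X.IsSRGWith v k a c) (hc : 1 ≤ c)
    (hbot : X ≠ ⊥) (htop : X ≠ ⊤) :
    (∃ z : {s : Finset (Fin v) // s.card = 2} → ℝ, z ≠ 0 ∧
        ((symSq X).adjMatrix ℝ).mulVec z
          = ((k : ℝ) + ((a : ℝ) - c) + Real.sqrt (((k : ℝ) - ((a : ℝ) - c)) ^ 2 - 4 * c)) • z) ∧
      ∀ (ν : ℝ) (z : {s : Finset (Fin v) // s.card = 2} → ℝ), z ≠ 0 →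
        ((symSq X).adjMatrix ℝ).mulVec z = ν • z →
        |ν| ≤ (k : ℝ) + ((a : ℝ) - c) + Real.sqrt (((k : ℝ) - ((a : ℝ) - c)) ^ 2 - 4 * c) :=
  symSq_spectral_radius_general X hX hc htop
end

section
/- Let X be a graph on v vertices whose adjacency matrix has spectral decomposition A = Σ_θ θE_θ. Let D be the diagonal of X□X. Then the D,D-submatrix of the walk generating matrix of X□X satisfies W_{D,D}(X□X, t) = Σ_{θ,τ} (1 − t(θ+τ))^{-1} E_θ ∘ E_τ, where ∘ is the entrywise (Schur) product. -/
open Matrix Kronecker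

/-!
The projections `E_θ ⊗ E_τ` form a complete family of orthogonal idempotents, and
`A ⊗ I + I ⊗ A = Σ_{θ,τ} (θ + τ) E_θ ⊗ E_τ`, so the `r`-th power of the adjacency matrix of
`X □ X` is `Σ_{θ,τ} (θ + τ)^r E_θ ⊗ E_τ`. Summing the geometric series in `t` and restricting to
the diagonal, where `(E_θ ⊗ E_τ)_{D,D} = E_θ ∘ E_τ`, gives the formula.
-/

theorem CompleteOrthogonalIdempotents.sum_smul_pow {R S ι : Type*} [CommSemiring R] [Semiring S]
    [Algebra R S] [Fintype ι] {e : ι → S} (he : CompleteOrthogonalIdempotents e) (θ : ι → R)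
    (r : ℕ) : (∑ i, θ i • e i) ^ r = ∑ i, θ i ^ r • e i := by
  classical
  induction r with
  | zero => simpa using he.complete.symm
  | succ r ih =>
    rw [pow_succ, ih, Finset.sum_mul_sum]
    refine Finset.sum_congr rfl fun i _ => ?_
    simp [he.mul_eq, smul_smul, pow_succ, mul_comm]

section Kronecker

variable {R ι κ m n : Type*} [CommSemiring R] [Fintype ι] [Fintype κ]

theorem Matrix.sum_kronecker (A : ι → Matrix m m R) (B : Matrix n n R) :
    (∑ i, A i) ⊗ₖ B = ∑ i, A i ⊗ₖ B := by
  ext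
  simp [sum_apply, Finset.sum_mul]

theorem Matrix.kronecker_sum (A : Matrix m m R) (B : κ → Matrix n n R) :
    A ⊗ₖ (∑ j, B j) = ∑ j, A ⊗ₖ B j := by
  ext
  simp [sum_apply, Finset.mul_sum]

theorem CompleteOrthogonalIdempotents.kronecker [Fintype m] [Fintype n] [DecidableEq m]
    [DecidableEq n] {E : ι → Matrix m m R} {F : κ → Matrix n n R}
    (hE : CompleteOrthogonalIdempotents E) (hF : CompleteOrthogonalIdempotents F) :
    CompleteOrthogonalIdempotents fun p : ι × κ => E p.1 ⊗ₖ F p.2 := by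
  classical
  refine ⟨OrthogonalIdempotents.iff_mul_eq.mpr fun p q => ?_, ?_⟩
  · rw [← mul_kronecker_mul, hE.mul_eq, hF.mul_eq]
    by_cases h₁ : p.1 = q.1 <;> by_cases h₂ : p.2 = q.2 <;> simp [h₁, h₂, Prod.ext_iff]
  · simp_rw [Fintype.sum_prod_type, ← kronecker_sum, ← sum_kronecker]
    rw [hE.complete, hF.complete, one_kronecker_one]

theorem Matrix.kronecker_one_add_one_kronecker_eq_sum [DecidableEq m] [DecidableEq n]
    {E : ι → Matrix m m R} {F : κ → Matrix n n R} (hE : ∑ i, E i = 1) (hF : ∑ j, F j = 1)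
    (θ : ι → R) (μ : κ → R) :
    (∑ i, θ i • E i) ⊗ₖ (1 : Matrix n n R) + (1 : Matrix m m R) ⊗ₖ (∑ j, μ j • F j)
      = ∑ p : ι × κ, (θ p.1 + μ p.2) • (E p.1 ⊗ₖ F p.2) := by
  conv_lhs => rw [← hE, ← hF]
  rw [sum_kronecker, sum_kronecker, Fintype.sum_prod_type, ← Finset.sum_add_distrib]
  refine Finset.sum_congr rfl fun i _ => ?_
  rw [kronecker_sum, kronecker_sum, ← Finset.sum_add_distrib]
  refine Finset.sum_congr rfl fun j _ => ?_
  rw [smul_kronecker, kronecker_smul, add_smul]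

end Kronecker

theorem Matrix.kronecker_submatrix_diag {R m : Type*} [Mul R] (A B : Matrix m m R) :
    (A ⊗ₖ B).submatrix (fun p => (p, p)) (fun q => (q, q)) = A ⊙ B :=
  rfl

theorem PowerSeries.inv_one_sub_C_mul_X {k : Type*} [Field k] (a : k) :
    (1 - C a * X)⁻¹ = mk fun r => a ^ r := by
  rw [PowerSeries.inv_eq_iff_mul_eq_one (by simp)]
  simpa [rescale_mk, rescale_X] using congrArg (rescale a) (mk_one_mul_one_sub_eq_one k)

theorem walk_generating_diagonal_schur_general {v n : ℕ} (X : SimpleGraph (Fin v))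
    [DecidableRel X.Adj] (θ : Fin n → ℝ) (E : Fin n → Matrix (Fin v) (Fin v) ℝ)
    (hdecomp : X.adjMatrix ℝ = ∑ i, θ i • E i)
    (hproj : ∀ i j, E i * E j = if i = j then E i else 0)
    (hsum : ∑ i, E i = 1) :
    ∀ p q : Fin v,
      PowerSeries.mk (fun r =>
          (((X.adjMatrix ℝ) ⊗ₖ (1 : Matrix (Fin v) (Fin v) ℝ)
              + (1 : Matrix (Fin v) (Fin v) ℝ) ⊗ₖ (X.adjMatrix ℝ)) ^ r) (p, p) (q, q))
        = ∑ i, ∑ j,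
            PowerSeries.C (Matrix.hadamard (E i) (E j) p q)
              * (1 - PowerSeries.C (θ i + θ j) * PowerSeries.X)⁻¹ := by
  have hE : CompleteOrthogonalIdempotents E :=
    ⟨OrthogonalIdempotents.iff_mul_eq.mpr hproj, hsum⟩
  have hpow (r : ℕ) : ((X.adjMatrix ℝ) ⊗ₖ (1 : Matrix (Fin v) (Fin v) ℝ)
      + (1 : Matrix (Fin v) (Fin v) ℝ) ⊗ₖ (X.adjMatrix ℝ)) ^ r
        = ∑ p : Fin n × Fin n, (θ p.1 + θ p.2) ^ r • (E p.1 ⊗ₖ E p.2) := by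
    rw [hdecomp, kronecker_one_add_one_kronecker_eq_sum hsum hsum,
      (hE.kronecker hE).sum_smul_pow]
  intro p q
  ext r
  simp only [PowerSeries.coeff_mk, hpow, ← kronecker_submatrix_diag,
    PowerSeries.inv_one_sub_C_mul_X, map_sum, PowerSeries.coeff_C_mul, Fintype.sum_prod_type,
    Matrix.sum_apply, Matrix.smul_apply, submatrix_apply]
  exact Finset.sum_congr rfl fun i _ => Finset.sum_congr rfl fun j _ => mul_comm _ _

/-- If `A = Σ_θ θ E_θ` is the spectral decomposition of the adjacency matrix of `X`,
and `D` is the diagonal of `X □ X`, then the walk generating matrix of `X □ X`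
restricted to `D` satisfies
`W_{D,D}(X □ X, t) = Σ_{θ,τ} (1 − t(θ+τ))⁻¹ E_θ ∘ E_τ` (Schur product),
as an identity of formal power series. -/
theorem walk_generating_diagonal_schur {v n : ℕ} (X : SimpleGraph (Fin v))
    [DecidableRel X.Adj] (θ : Fin n → ℝ) (E : Fin n → Matrix (Fin v) (Fin v) ℝ)
    (hdecomp : X.adjMatrix ℝ = ∑ i, θ i • E i)
    (hproj : ∀ i j, E i * E j = if i = j then E i else 0)
    (hsymm : ∀ i, (E i)ᵀ = E i)
    (hsum : ∑ i, E i = 1) :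
    ∀ p q : Fin v,
      PowerSeries.mk (fun r =>
          (((X.adjMatrix ℝ) ⊗ₖ (1 : Matrix (Fin v) (Fin v) ℝ)
              + (1 : Matrix (Fin v) (Fin v) ℝ) ⊗ₖ (X.adjMatrix ℝ)) ^ r) (p, p) (q, q))
        = ∑ i, ∑ j,
            PowerSeries.C (Matrix.hadamard (E i) (E j) p q)
              * (1 - PowerSeries.C (θ i + θ j) * PowerSeries.X)⁻¹ :=
  walk_generating_diagonal_schur_general X θ E hdecomp hproj hsum
end

section
/- Let X₁ and X₂ be cospectral graphs on v vertices with adjacency matrices A₁, A₂ satisfying L^T A₁ L = A₂ for some orthogonal matrix L. Let F be the flip (swap) operator on R^v ⊗ R^v, R the normalized characteristic matrix of the orbit partition of the flip (so R^T R = I and RR^T = (I+F)/2), and C_i = R^T (A_i⊗I + I⊗A_i) R. Then C₁ and C₂ are similar matrices; in particular the quotients of X₁□X₁ and X₂□X₂ by the flip are cospectral. -/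
open Matrix Kronecker

/-!
Since `R Rᵀ = (1 + F)/2`, every matrix commuting with the flip `F` commutes with the projection
`R Rᵀ`, and on such matrices the compression `Y ↦ Rᵀ Y R` is multiplicative
(`Rᵀ X R Rᵀ Y R = Rᵀ X Y R Rᵀ R = Rᵀ X Y R`). Both `L ⊗ L` and `A ⊗ 1 + 1 ⊗ A` commute with `F`,
so `M = Rᵀ (L ⊗ L) R` is orthogonal and
`Mᵀ C₁ M = Rᵀ (L ⊗ L)ᵀ (A₁ ⊗ 1 + 1 ⊗ A₁) (L ⊗ L) R = Rᵀ (A₂ ⊗ 1 + 1 ⊗ A₂) R = C₂`.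
-/

namespace Matrix

variable {m n α : Type*}

section Compression

variable [Fintype m] [CommSemiring α]

def compression (R : Matrix m n α) (Y : Matrix m m α) : Matrix n n α := Rᵀ * Y * R

theorem transpose_compression (R : Matrix m n α) (Y : Matrix m m α) :
    (compression R Y)ᵀ = compression R Yᵀ := by
  simp only [compression, transpose_mul, transpose_transpose, Matrix.mul_assoc]

variable [DecidableEq n] {R : Matrix m n α} (hR : Rᵀ * R = 1)
include hR

theorem compression_one [DecidableEq m] : compression R 1 = 1 := by
  rw [compression, Matrix.mul_one, hR]

theorem compression_mul_compression [Fintype n] (X : Matrix m m α) {Y : Matrix m m α}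
    (hY : Commute Y (R * Rᵀ)) : compression R X * compression R Y = compression R (X * Y) := by
  calc compression R X * compression R Y = Rᵀ * X * (Y * (R * Rᵀ)) * R := by
        simp only [compression, hY.eq, Matrix.mul_assoc]
    _ = compression R (X * Y) := by
        simp only [compression, Matrix.mul_assoc, hR, Matrix.mul_one]

end Compression

section Flip

def flipMatrix (n α : Type*) [DecidableEq n] [Zero α] [One α] : Matrix (n × n) (n × n) α :=
  of fun p q => if p.1 = q.2 ∧ p.2 = q.1 then 1 else 0

variable [DecidableEq n]

theorem flipMatrix_eq_toMatrix_prodComm [Zero α] [One α] :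
    flipMatrix n α = (Equiv.prodComm n n).toPEquiv.toMatrix := by
  ext ⟨i, j⟩ ⟨k, l⟩
  simp [flipMatrix, PEquiv.toMatrix_apply, Prod.ext_iff, eq_comm, and_comm]

variable [Fintype n] [CommSemiring α]

theorem flipMatrix_mul_kronecker (A B : Matrix n n α) :
    flipMatrix n α * (A ⊗ₖ B) = (B ⊗ₖ A) * flipMatrix n α := by
  rw [flipMatrix_eq_toMatrix_prodComm, PEquiv.toMatrix_toPEquiv_mul,
    PEquiv.mul_toMatrix_toPEquiv]
  ext ⟨i, j⟩ ⟨k, l⟩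
  simp [mul_comm]

theorem commute_flipMatrix_kroneckerSum (A : Matrix n n α) :
    Commute (flipMatrix n α) (A ⊗ₖ 1 + 1 ⊗ₖ A) := by
  rw [Commute, SemiconjBy, Matrix.mul_add, Matrix.add_mul, flipMatrix_mul_kronecker,
    flipMatrix_mul_kronecker, add_comm]

end Flip

section Orthogonal

variable [Fintype m] [DecidableEq m] [Fintype n] [DecidableEq n] [CommSemiring α]
  {L : Matrix m m α} {N : Matrix n n α} (hL : Lᵀ * L = 1) (hN : Nᵀ * N = 1)
include hL hN

theorem transpose_kronecker_mul_kronecker : (L ⊗ₖ N)ᵀ * (L ⊗ₖ N) = 1 := by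
  rw [← kroneckerMap_transpose, ← mul_kronecker_mul, hL, hN, one_kronecker_one]

theorem transpose_kronecker_mul_kroneckerSum_mul_kronecker (A : Matrix m m α)
    (B : Matrix n n α) :
    (L ⊗ₖ N)ᵀ * (A ⊗ₖ 1 + 1 ⊗ₖ B) * (L ⊗ₖ N) = (Lᵀ * A * L) ⊗ₖ 1 + 1 ⊗ₖ (Nᵀ * B * N) := by
  simp only [← kroneckerMap_transpose, Matrix.mul_add, Matrix.add_mul, ← mul_kronecker_mul,
    Matrix.mul_one, hL, hN]

end Orthogonal

theorem exists_conj_and_charpoly_eq_of_transpose_mul_self [Fintype n] [DecidableEq n]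
    [CommRing α] {M C₁ C₂ : Matrix n n α} (hM : Mᵀ * M = 1) (hC : Mᵀ * C₁ * M = C₂) :
    (∃ M : Matrix n n α, IsUnit M ∧ M⁻¹ * C₁ * M = C₂) ∧ C₁.charpoly = C₂.charpoly := by
  have hunit : IsUnit M := IsUnit.of_mul_eq_one _ (mul_eq_one_comm.mp hM)
  have hconj : M⁻¹ * C₁ * M = C₂ := by rwa [inv_eq_left_inv hM]
  exact ⟨⟨M, hunit, hconj⟩, hconj ▸ (charpoly_units_conj' hunit.unit C₁).symm⟩

end Matrix

/-- Let `X₁, X₂` be cospectral graphs with adjacency matrices `A₁, A₂` and `LᵀA₁L = A₂`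
for an orthogonal `L`. With `F` the flip operator on `ℝ^v ⊗ ℝ^v`, `R` the normalized
characteristic matrix of the orbit partition of the flip (`RᵀR = I`, `RRᵀ = (I+F)/2`),
and `Cᵢ = Rᵀ(Aᵢ⊗I + I⊗Aᵢ)R`, the matrices `C₁` and `C₂` are similar; in particular the
flip quotients of `X₁ □ X₁` and `X₂ □ X₂` are cospectral. -/
theorem flip_quotients_similar {v : ℕ} {ι : Type*} [Fintype ι] [DecidableEq ι]
    (X₁ X₂ : SimpleGraph (Fin v)) [DecidableRel X₁.Adj] [DecidableRel X₂.Adj]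
    (L : Matrix (Fin v) (Fin v) ℝ) (hL : Lᵀ * L = 1)
    (hLA : Lᵀ * X₁.adjMatrix ℝ * L = X₂.adjMatrix ℝ)
    (F : Matrix (Fin v × Fin v) (Fin v × Fin v) ℝ)
    (hF : F = Matrix.of fun p q => if p.1 = q.2 ∧ p.2 = q.1 then (1 : ℝ) else 0)
    (R : Matrix (Fin v × Fin v) ι ℝ)
    (hR1 : Rᵀ * R = 1) (hR2 : R * Rᵀ = (2 : ℝ)⁻¹ • (1 + F))
    (C₁ C₂ : Matrix ι ι ℝ)
    (hC1 : C₁ = Rᵀ * ((X₁.adjMatrix ℝ) ⊗ₖ (1 : Matrix (Fin v) (Fin v) ℝ)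
        + (1 : Matrix (Fin v) (Fin v) ℝ) ⊗ₖ (X₁.adjMatrix ℝ)) * R)
    (hC2 : C₂ = Rᵀ * ((X₂.adjMatrix ℝ) ⊗ₖ (1 : Matrix (Fin v) (Fin v) ℝ)
        + (1 : Matrix (Fin v) (Fin v) ℝ) ⊗ₖ (X₂.adjMatrix ℝ)) * R) :
    (∃ M : Matrix ι ι ℝ, IsUnit M ∧ M⁻¹ * C₁ * M = C₂) ∧ C₁.charpoly = C₂.charpoly := by
  have hF' : F = flipMatrix (Fin v) ℝ := hF
  have commute_proj (Y : Matrix (Fin v × Fin v) (Fin v × Fin v) ℝ) (hY : Commute F Y) :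
      Commute Y (R * Rᵀ) :=
    hR2 ▸ ((Commute.one_right Y).add_right hY.symm).smul_right _
  have hK : Commute (L ⊗ₖ L) (R * Rᵀ) :=
    commute_proj _ (hF' ▸ flipMatrix_mul_kronecker L L)
  have hB : Commute (X₁.adjMatrix ℝ ⊗ₖ 1 + 1 ⊗ₖ X₁.adjMatrix ℝ) (R * Rᵀ) :=
    commute_proj _ (hF' ▸ commute_flipMatrix_kroneckerSum _)
  have hM : (compression R (L ⊗ₖ L))ᵀ * compression R (L ⊗ₖ L) = 1 := by
    rw [transpose_compression, compression_mul_compression hR1 _ hK,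
      transpose_kronecker_mul_kronecker hL hL, compression_one hR1]
  refine exists_conj_and_charpoly_eq_of_transpose_mul_self hM ?_
  rw [transpose_compression, hC1, hC2, ← compression,
    compression_mul_compression hR1 _ hB, compression_mul_compression hR1 _ hK, compression,
    transpose_kronecker_mul_kroneckerSum_mul_kronecker hL hL, hLA]
end
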